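/- arXiv:2412.04612 — 6 statements merged into one kernel-verified Lean document; each statement's English description precedes it below -/
import Mathlib

section
/- Let e_1,…,e_n be a basis of A. Then A is baric if and only if the Etherington system of A with respect to e_1,…,e_n has a nontrivial solution. -/
/-! `e.constr K` identifies `Fin n → K` with the linear functionals on `A`. By bilinearity of the
product, `e.constr K x` is multiplicative as soon as it is so on pairs of basis vectors, and those
conditions are exactly the Etherington equations for `x`. -/

/-- A weight homomorphism of a (not necessarily associative, commutative or unital)
`K`-algebra `A` is a nonzero `K`-linear map `A → K` that is multiplicative. -/
def IsWeightHom {K A : Type*} [Field K] [NonUnitalNonAssocRing A] [Module K A]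
    (w : A →ₗ[K] K) : Prop :=
  w ≠ 0 ∧ ∀ a b : A, w (a * b) = w a * w b

/-- `x : Fin n → K` is a solution of the Etherington system of `A` with respect to the
basis `e`, whose structure constants are `γ i j k = e.repr (e i * e j) k`. -/
def EthSol {K A : Type*} [Field K] [NonUnitalNonAssocRing A] [Module K A] {n : ℕ}
    (e : Module.Basis (Fin n) K A) (x : Fin n → K) : Prop :=
  ∀ i j, x i * x j = ∑ k, e.repr (e i * e j) k * x k

/-- A basis `e` is semi-natural if all its structure constants `γ i j k = e.repr (e i * e j) k`
satisfy `∑ k, γ i j k = 1`. -/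
def SemiNatural {K A : Type*} [Field K] [NonUnitalNonAssocRing A] [Module K A] {n : ℕ}
    (e : Module.Basis (Fin n) K A) : Prop :=
  ∀ i j, ∑ k, e.repr (e i * e j) k = 1

theorem Module.Basis.map_mul_iff {R A ι : Type*} [CommSemiring R] [NonUnitalNonAssocSemiring A]
    [Module R A] [SMulCommClass R A A] [IsScalarTower R A A] (e : Module.Basis ι R A)
    (w : A →ₗ[R] R) :
    (∀ a b : A, w (a * b) = w a * w b) ↔ ∀ i j, w (e i * e j) = w (e i) * w (e j) := by
  refine ⟨fun h i j => h _ _, fun h a b => ?_⟩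
  have hbilin : (LinearMap.mul R A).compr₂ w = (LinearMap.mul R R).compl₁₂ w w :=
    LinearMap.ext_basis e e h
  exact LinearMap.congr_fun₂ hbilin a b

theorem ethSol_iff_constr_map_mul {K A : Type*} [Field K] [NonUnitalNonAssocRing A] [Module K A]
    {n : ℕ} (e : Module.Basis (Fin n) K A) (x : Fin n → K) :
    EthSol e x ↔ ∀ i j, e.constr K x (e i * e j) = e.constr K x (e i) * e.constr K x (e j) := by
  have hconstr (v : A) : e.constr K x v = ∑ k, e.repr v k * x k := by simp
  simp only [EthSol, Module.Basis.constr_basis, hconstr (_ * _), eq_comm]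

theorem isWeightHom_constr_iff {K A : Type*} [Field K] [NonUnitalNonAssocRing A] [Module K A]
    [SMulCommClass K A A] [IsScalarTower K A A] {n : ℕ} (e : Module.Basis (Fin n) K A)
    (x : Fin n → K) : IsWeightHom (e.constr K x) ↔ x ≠ 0 ∧ EthSol e x := by
  rw [IsWeightHom, (e.constr K).map_ne_zero_iff, e.map_mul_iff, ethSol_iff_constr_map_mul]

/-- `A` is baric if and only if the Etherington system of `A` with respect to the basis `e`
has a nontrivial solution. -/
theorem stmt_1 (K A : Type*) [Field K] [NonUnitalNonAssocRing A] [Module K A]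
    [SMulCommClass K A A] [IsScalarTower K A A] (n : ℕ) (e : Module.Basis (Fin n) K A) :
    (∃ w : A →ₗ[K] K, IsWeightHom w) ↔ (∃ x : Fin n → K, x ≠ 0 ∧ EthSol e x) := by
  simp only [← isWeightHom_constr_iff, (e.constr K).surjective.exists]
end

section
/- Let A be a baric algebra with a basis e_1,…,e_n whose structure constants γ_{ijk} satisfy γ_{ijk} = γ_{ij'k} for all 1 ≤ i,j,j',k ≤ n. Then A has exactly one weight homomorphism. -/
/-!
A weight homomorphism `w` turns the multiplication table into the Etherington system
`w(eᵢ) w(eⱼ) = ∑ₖ γᵢⱼₖ w(eₖ)`. When `γᵢⱼₖ` does not depend on `j`, the right-hand side does not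
either, so cancelling a nonzero `w(eᵢ)` makes all `w(eⱼ)` equal to one nonzero constant `c`;
the equation for `i = j` then reads `c² = c ∑ₖ γⱼⱼₖ`, which pins down `c` and hence `w`.
-/

section

open Module

variable {K A : Type*} [Field K] [NonUnitalNonAssocRing A] [Module K A] {n : ℕ}

lemma IsWeightHom.ethSol {w : A →ₗ[K] K} (hw : IsWeightHom w) (e : Basis (Fin n) K A) :
    EthSol e (w ∘ e) := by
  intro i j
  conv_lhs => rw [Function.comp_apply, Function.comp_apply, ← hw.2, ← e.sum_repr (e i * e j)]
  simp only [map_sum, map_smul, smul_eq_mul, Function.comp_apply]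

lemma IsWeightHom.exists_apply_basis_ne_zero {w : A →ₗ[K] K} (hw : IsWeightHom w)
    (e : Basis (Fin n) K A) : ∃ i, w (e i) ≠ 0 := by
  by_contra! h
  exact hw.1 (e.ext fun i => by simpa using h i)

lemma EthSol.eq_sum_structConst {e : Basis (Fin n) K A} {x : Fin n → K} (hx : EthSol e x)
    (hγ : ∀ i j j' k, e.repr (e i * e j) k = e.repr (e i * e j') k) {i₀ : Fin n}
    (hi₀ : x i₀ ≠ 0) (j : Fin n) : x j = ∑ k, e.repr (e j * e j) k := by
  have hconst : ∀ j j', x j = x j' := fun j j' =>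
    mul_left_cancel₀ hi₀ <| by rw [hx, hx]; simp only [hγ i₀ j j']
  have hj : x j ≠ 0 := hconst j i₀ ▸ hi₀
  apply mul_right_cancel₀ hj
  rw [hx, Finset.sum_mul]
  exact Finset.sum_congr rfl fun k _ => by rw [hconst k j]

lemma IsWeightHom.apply_basis_eq_sum_structConst {w : A →ₗ[K] K} (hw : IsWeightHom w)
    {e : Basis (Fin n) K A} (hγ : ∀ i j j' k, e.repr (e i * e j) k = e.repr (e i * e j') k)
    (j : Fin n) : w (e j) = ∑ k, e.repr (e j * e j) k := by
  obtain ⟨i₀, hi₀⟩ := hw.exists_apply_basis_ne_zero e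
  exact (hw.ethSol e).eq_sum_structConst hγ hi₀ j

end

theorem stmt_8_general (K A : Type*) [Field K] [NonUnitalNonAssocRing A] [Module K A] (n : ℕ)
    (e : Module.Basis (Fin n) K A)
    (hγ : ∀ i j j' k : Fin n, e.repr (e i * e j) k = e.repr (e i * e j') k)
    (hbaric : ∃ w : A →ₗ[K] K, IsWeightHom w) :
    ∃! w : A →ₗ[K] K, IsWeightHom w := by
  obtain ⟨w, hw⟩ := hbaric
  refine ⟨w, hw, fun v hv => e.ext fun j => ?_⟩
  rw [hv.apply_basis_eq_sum_structConst hγ j, hw.apply_basis_eq_sum_structConst hγ j]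

/-- A baric algebra with a basis whose structure constants satisfy `γ i j k = γ i j' k` for
all `i, j, j', k` has exactly one weight homomorphism. -/
theorem stmt_8 (K A : Type*) [Field K] [NonUnitalNonAssocRing A] [Module K A]
    [SMulCommClass K A A] [IsScalarTower K A A] (n : ℕ) (e : Module.Basis (Fin n) K A)
    (hγ : ∀ i j j' k : Fin n, e.repr (e i * e j) k = e.repr (e i * e j') k)
    (hbaric : ∃ w : A →ₗ[K] K, IsWeightHom w) :
    ∃! w : A →ₗ[K] K, IsWeightHom w :=
  stmt_8_general K A n e hγ hbaric
end

section
/- Let e_1,…,e_n be a semi-natural basis of A all of whose structure constants are equal to one another, i.e., there exists γ ∈ K with γ_{ijk} = γ for all 1 ≤ i,j,k ≤ n. Let ω : A → K be the K-linear map with ω(e_i) = 1 for all i. Then every element a ∈ A with ω(a) = 0 satisfies a² = 0 (so the kernel of ω is nil). -/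
namespace Module.Basis

variable {ι K A : Type*} [Fintype ι] [CommRing K] [NonUnitalNonAssocSemiring A] [Module K A]
  (e : Basis ι K A) {γ : K}

theorem mul_eq_smul_sum_of_structConst_eq (hγ : ∀ i j k, e.repr (e i * e j) k = γ) (i j : ι) :
    e i * e j = γ • ∑ k, e k := by
  conv_lhs => rw [← e.sum_repr (e i * e j)]
  simp only [hγ, Finset.smul_sum]

theorem mul_eq_smul_smul_sum_of_structConst_eq [SMulCommClass K A A] [IsScalarTower K A A]
    (hγ : ∀ i j k, e.repr (e i * e j) k = γ) {ω : A →ₗ[K] K} (hω : ∀ i, ω (e i) = 1) (a b : A) :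
    a * b = (ω a * ω b) • γ • ∑ k, e k := by
  have hB : LinearMap.mul K A =
      ((LinearMap.mul K K).compl₁₂ ω ω).compr₂ (LinearMap.toSpanSingleton K A (γ • ∑ k, e k)) :=
    LinearMap.ext_basis e e fun i j => by simp [hω, e.mul_eq_smul_sum_of_structConst_eq hγ]
  exact LinearMap.congr_fun₂ hB a b

end Module.Basis

theorem stmt_9_general (K A : Type*) [Field K] [NonUnitalNonAssocRing A] [Module K A]
    [SMulCommClass K A A] [IsScalarTower K A A] (n : ℕ) (e : Module.Basis (Fin n) K A)
    (γ : K) (hγ : ∀ i j k : Fin n, e.repr (e i * e j) k = γ)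
    (ω : A →ₗ[K] K) (hω : ∀ i : Fin n, ω (e i) = 1) :
    ∀ a : A, ω a = 0 → a * a = 0 := by
  intro a ha
  rw [e.mul_eq_smul_smul_sum_of_structConst_eq hγ hω, ha, zero_mul, zero_smul]

/-- If `e` is a semi-natural basis of `A` all of whose structure constants are equal to one
another, and `ω : A → K` is the linear map with `ω (e i) = 1` for all `i`, then every
`a ∈ A` with `ω a = 0` satisfies `a * a = 0`; so the kernel of `ω` is nil. -/
theorem stmt_9 (K A : Type*) [Field K] [NonUnitalNonAssocRing A] [Module K A]
    [SMulCommClass K A A] [IsScalarTower K A A] (n : ℕ) (e : Module.Basis (Fin n) K A)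
    (he : SemiNatural e) (γ : K) (hγ : ∀ i j k : Fin n, e.repr (e i * e j) k = γ)
    (ω : A →ₗ[K] K) (hω : ∀ i : Fin n, ω (e i) = 1) :
    ∀ a : A, ω a = 0 → a * a = 0 :=
  stmt_9_general K A n e γ hγ ω hω
end

section
/- Every 2-dimensional non-commutative baric algebra A over K has exactly one weight homomorphism. -/
namespace IsWeightHom

variable {K A : Type*} [Field K] [NonUnitalNonAssocRing A] [Module K A] {w w' : A →ₗ[K] K}

theorem map_commutator (hw : IsWeightHom w) (a b : A) : w (a * b - b * a) = 0 := by
  rw [map_sub, hw.2, hw.2, mul_comm, sub_self]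

theorem eq_of_smul_eq (hw : IsWeightHom w) (hw' : IsWeightHom w') {c : K} (h : c • w = w') :
    w = w' := by
  obtain ⟨a, ha⟩ : ∃ a, w a ≠ 0 := DFunLike.ne_iff.1 hw.1
  have hc_ne : c ≠ 0 := by
    rintro rfl
    exact hw'.1 (by rw [← h, zero_smul])
  have hc_sq : c * c = c * 1 := by
    have hsq := hw'.2 a a
    rw [← h, LinearMap.smul_apply, LinearMap.smul_apply, hw.2, smul_eq_mul, smul_eq_mul] at hsq
    have hwa : w a * w a ≠ 0 := mul_ne_zero ha ha
    exact mul_right_cancel₀ hwa (by linear_combination -hsq)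
  rw [← h, mul_left_cancel₀ hc_ne hc_sq, one_smul]

theorem linearIndependent_pair (hw : IsWeightHom w) (hw' : IsWeightHom w') (hne : w ≠ w') :
    LinearIndependent K ![w, w'] :=
  (LinearIndependent.pair_iff' hw.1).2 fun _ h ↦ hne (hw.eq_of_smul_eq hw' h)

theorem mul_comm_of_ne (hdim : Module.finrank K A = 2) (hw : IsWeightHom w)
    (hw' : IsWeightHom w') (hne : w ≠ w') (a b : A) : a * b = b * a := by
  have hspan : Submodule.span K (Set.range ![w, w']) = ⊤ :=
    (hw.linearIndependent_pair hw' hne).span_eq_top_of_card_eq_finrank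
      (by rw [Fintype.card_fin, Subspace.dual_finrank_eq, hdim])
  have hkill : Submodule.span K (Set.range ![w, w']) ≤
      LinearMap.ker (Module.Dual.eval K A (a * b - b * a)) := by
    rw [Submodule.span_le, Set.range_subset_iff, Fin.forall_fin_two]
    exact ⟨hw.map_commutator a b, hw'.map_commutator a b⟩
  rw [hspan, top_le_iff, LinearMap.ker_eq_top] at hkill
  exact sub_eq_zero.1 ((Module.forall_dual_apply_eq_zero_iff K _).1 (LinearMap.congr_fun hkill))

end IsWeightHom

theorem stmt_10_general (K A : Type*) [Field K] [NonUnitalNonAssocRing A] [Module K A]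
    (hdim : Module.finrank K A = 2)
    (hnc : ∃ a b : A, a * b ≠ b * a)
    (hbaric : ∃ w : A →ₗ[K] K, IsWeightHom w) :
    ∃! w : A →ₗ[K] K, IsWeightHom w := by
  obtain ⟨w, hw⟩ := hbaric
  obtain ⟨a, b, hab⟩ := hnc
  refine ⟨w, hw, fun w' hw' ↦ ?_⟩
  by_contra hne
  exact hab (hw'.mul_comm_of_ne hdim hw hne a b)

/-- Every 2-dimensional non-commutative baric algebra has exactly one weight
homomorphism. -/
theorem stmt_10 (K A : Type*) [Field K] [NonUnitalNonAssocRing A] [Module K A]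
    [SMulCommClass K A A] [IsScalarTower K A A] [FiniteDimensional K A]
    (hdim : Module.finrank K A = 2)
    (hnc : ∃ a b : A, a * b ≠ b * a)
    (hbaric : ∃ w : A →ₗ[K] K, IsWeightHom w) :
    ∃! w : A →ₗ[K] K, IsWeightHom w :=
  stmt_10_general K A hdim hnc hbaric
end

section
/- Let e_1,…,e_n and f_1,…,f_n be bases of A, and let M = (σ_{ik}) be the transition matrix from e_1,…,e_n to f_1,…,f_n. Then the basis e_1,…,e_n is semi-natural if and only if the n-tuple (α_1,…,α_n), where α_i = Σ_{k=1}^n σ_{ik}, is a solution of the Etherington system of A with respect to f_1,…,f_n. -/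
/-!
With `w := ∑ k, e.coord k`, the sum of coordinates in `e`, semi-naturality of `e` says
`w (e i * e j) = 1 = w (e i) * w (e j)`, while `α i = w (f i)` and the Etherington system with
respect to `f` at `x = w ∘ f` reads `w (f i) * w (f j) = w (f i * f j)`. By bilinearity of the
product, each of these is equivalent to `w` being multiplicative on all of `A`.
-/

open Module

section

variable {R M ι : Type*} [CommSemiring R] [NonUnitalNonAssocSemiring M] [Module R M]

lemma Module.Basis.sum_repr_mul_map [Fintype ι] (b : Basis ι R M) (w : M →ₗ[R] R) (a : M) :
    ∑ k, b.repr a k * w (b k) = w a := by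
  conv_rhs => rw [← b.sum_repr a, map_sum]
  simp only [map_smul, smul_eq_mul]

lemma map_mul_iff_forall_basis [SMulCommClass R M M] [IsScalarTower R M M]
    (b : Basis ι R M) (w : M →ₗ[R] R) :
    (∀ i j, w (b i * b j) = w (b i) * w (b j)) ↔ ∀ x y : M, w (x * y) = w x * w y := by
  have := LinearMap.ext_iff_basis b b
    (B := (LinearMap.mul R M).compr₂ w) (B' := (LinearMap.mul R R).compl₁₂ w w)
  simp only [LinearMap.ext_iff, LinearMap.compr₂_apply, LinearMap.compl₁₂_apply,
    LinearMap.mul_apply'] at this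
  exact this.symm

end

section

variable {K A : Type*} [Field K] [NonUnitalNonAssocRing A] [Module K A] {n : ℕ}

lemma semiNatural_iff_ethSol_one (e : Basis (Fin n) K A) : SemiNatural e ↔ EthSol e 1 := by
  simp [SemiNatural, EthSol, eq_comm]

variable [SMulCommClass K A A] [IsScalarTower K A A]

lemma ethSol_comp_iff_map_mul (f : Basis (Fin n) K A) (w : A →ₗ[K] K) :
    EthSol f (fun i => w (f i)) ↔ ∀ a b : A, w (a * b) = w a * w b := by
  simp only [EthSol, f.sum_repr_mul_map, eq_comm (a := w (f _) * _)]
  exact map_mul_iff_forall_basis f w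

end

/-- Let `σ` be the transition matrix from the basis `e` to the basis `f` (so that
`f i = ∑ k, σ i k • e k`).  Then `e` is semi-natural if and only if the tuple
`(α 1, …, α n)` with `α i = ∑ k, σ i k` is a solution of the Etherington system of `A`
with respect to `f`. -/
theorem stmt_11 (K A : Type*) [Field K] [NonUnitalNonAssocRing A] [Module K A]
    [SMulCommClass K A A] [IsScalarTower K A A] (n : ℕ)
    (e f : Module.Basis (Fin n) K A) (σ : Matrix (Fin n) (Fin n) K)
    (hσ : ∀ i, f i = ∑ k, σ i k • e k) :
    SemiNatural e ↔ EthSol f (fun i => ∑ k, σ i k) := by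
  set w : A →ₗ[K] K := ∑ k, e.coord k
  have hwe : ∀ i, w (e i) = 1 := fun i => by
    simp [w, Finsupp.single_apply]
  have hwf : ∀ i, w (f i) = ∑ k, σ i k := fun i => by
    simp [hσ i, hwe]
  have hone : (fun i => w (e i)) = 1 := funext hwe
  rw [semiNatural_iff_ethSol_one, ← hone, ← funext hwf, ethSol_comp_iff_map_mul,
    ethSol_comp_iff_map_mul]
end

section
/- Let A be a baric algebra, let S be the set of semi-natural bases of A, and define the relation ~ on S by: e ~ e' if and only if the transition matrix from e to e' is row stochastic. Then ~ is an equivalence relation on S, and the map sending the equivalence class of a semi-natural basis e_1,…,e_n to the weight homomorphism ω determined by ω(e_i) = 1 for all i is a well-defined bijection from S/~ onto the set of weight homomorphisms of A. -/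
/-- The relation on semi-natural bases: the transition matrix from `e` to `e'`
(whose `(i, k)` entry is `e.repr (e' i) k`) is row stochastic. -/
def snRel {K A : Type*} [Field K] [NonUnitalNonAssocRing A] [Module K A] {n : ℕ}
    (e e' : {e : Module.Basis (Fin n) K A // SemiNatural e}) : Prop :=
  ∀ i, ∑ k, e.1.repr (e'.1 i) k = 1

open Module

namespace Module.Basis

theorem sumCoords_apply_fintype {R M ι : Type*} [Semiring R] [AddCommMonoid M] [Module R M]
    [Fintype ι] (b : Basis ι R M) (x : M) : b.sumCoords x = ∑ i, b.repr x i := by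
  rw [coe_sumCoords_of_fintype]
  simp

variable {K V ι : Type*} [DivisionRing K] [AddCommGroup V] [Module K V]

theorem top_le_span_preimage_one (w : V →ₗ[K] K) (hw : w ≠ 0) :
    ⊤ ≤ Submodule.span K (w ⁻¹' {1}) := by
  obtain ⟨a, ha⟩ := LinearMap.surjective_of_ne_zero hw 1
  have mem : ∀ x, w x = 1 → x ∈ Submodule.span K (w ⁻¹' {1}) := fun x hx ↦
    Submodule.subset_span hx
  intro x _
  have hx : x = (x - w x • a + a) + (w x - 1) • a := by
    rw [sub_smul, one_smul]; abel
  rw [hx]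
  exact Submodule.add_mem _ (mem _ (by simp [ha])) (Submodule.smul_mem _ _ (mem a ha))

theorem exists_basis_forall_apply_eq_one (b : Basis ι K V) (w : V →ₗ[K] K) (hw : w ≠ 0) :
    ∃ e : Basis ι K V, ∀ i, w (e i) = 1 := by
  let e := Basis.ofSpan (top_le_span_preimage_one w hw)
  refine ⟨e.reindex (e.indexEquiv b), fun i ↦ ?_⟩
  have hmem : e.reindex (e.indexEquiv b) i ∈ Set.range e := by
    rw [reindex_apply]; exact Set.mem_range_self _
  exact ofSpan_subset (top_le_span_preimage_one w hw) hmem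

end Module.Basis

section SemiNatural

variable {K A : Type*} [Field K] [NonUnitalNonAssocRing A] [Module K A] {n : ℕ}

theorem Module.Basis.sumCoords_mul_of_semiNatural [SMulCommClass K A A] [IsScalarTower K A A]
    {e : Basis (Fin n) K A} (he : SemiNatural e) (a b : A) :
    e.sumCoords (a * b) = e.sumCoords a * e.sumCoords b := by
  have hbilin : (LinearMap.mul K A).compr₂ e.sumCoords =
      (LinearMap.mul K K).compl₁₂ e.sumCoords e.sumCoords := by
    refine e.ext fun i ↦ e.ext fun j ↦ ?_
    simpa [Basis.sumCoords_apply_fintype] using he i j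
  exact LinearMap.congr_fun₂ hbilin a b

theorem Module.Basis.isWeightHom_sumCoords [SMulCommClass K A A] [IsScalarTower K A A]
    [Nontrivial A] {e : Basis (Fin n) K A} (he : SemiNatural e) : IsWeightHom e.sumCoords := by
  refine ⟨fun h ↦ ?_, e.sumCoords_mul_of_semiNatural he⟩
  obtain ⟨i⟩ := e.index_nonempty
  simpa [h] using e.sumCoords_self_apply (i := i)

theorem semiNatural_of_forall_apply_eq_one {w : A →ₗ[K] K} (hw : IsWeightHom w)
    {e : Basis (Fin n) K A} (he : ∀ i, w (e i) = 1) : SemiNatural e := by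
  have hwe : e.sumCoords = w := e.ext fun i ↦ by rw [Basis.sumCoords_self_apply, he]
  intro i j
  rw [← Basis.sumCoords_apply_fintype, hwe, hw.2, he, he, one_mul]

theorem snRel_iff_sumCoords_eq {e e' : {e : Basis (Fin n) K A // SemiNatural e}} :
    snRel e e' ↔ e.1.sumCoords = e'.1.sumCoords := by
  simp only [snRel, ← Basis.sumCoords_apply_fintype]
  exact ⟨fun h ↦ e'.1.ext fun i ↦ by rw [h, Basis.sumCoords_self_apply],
    fun h i ↦ by rw [h, Basis.sumCoords_self_apply]⟩

theorem equivalence_snRel : Equivalence (snRel (K := K) (A := A) (n := n)) where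
  refl _ := snRel_iff_sumCoords_eq.2 rfl
  symm h := snRel_iff_sumCoords_eq.2 (snRel_iff_sumCoords_eq.1 h).symm
  trans h h' := snRel_iff_sumCoords_eq.2
    ((snRel_iff_sumCoords_eq.1 h).trans (snRel_iff_sumCoords_eq.1 h'))

end SemiNatural

/-- For a baric algebra `A`, the relation `snRel` on the set of semi-natural bases (two
bases are related iff the transition matrix from one to the other is row stochastic) is an
equivalence relation, and the map sending the class of a semi-natural basis `e` to the
weight homomorphism `ω` with `ω (e i) = 1` for all `i` is a well-defined bijection from the
quotient onto the set of weight homomorphisms of `A`. -/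
theorem stmt_19 (K A : Type*) [Field K] [NonUnitalNonAssocRing A] [Module K A]
    [SMulCommClass K A A] [IsScalarTower K A A] [FiniteDimensional K A]
    (n : ℕ) (hn : Module.finrank K A = n)
    (hbaric : ∃ w : A →ₗ[K] K, IsWeightHom w) :
    Equivalence (snRel (K := K) (A := A) (n := n)) ∧
    ∃ F : Quot (snRel (K := K) (A := A) (n := n)) → {w : A →ₗ[K] K // IsWeightHom w},
      Function.Bijective F ∧
      ∀ e : {e : Module.Basis (Fin n) K A // SemiNatural e},
        ∀ i, (F (Quot.mk snRel e)).1 (e.1 i) = 1 := by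
  obtain ⟨w₀, hw₀⟩ := hbaric
  obtain ⟨a, ha⟩ := LinearMap.surjective_of_ne_zero hw₀.1 1
  have : Nontrivial A := nontrivial_of_ne a 0 (by rintro rfl; simp at ha)
  let F : Quot (snRel (K := K) (A := A) (n := n)) → {w : A →ₗ[K] K // IsWeightHom w} :=
    Quot.lift (fun e ↦ ⟨e.1.sumCoords, e.1.isWeightHom_sumCoords e.2⟩)
      fun _ _ h ↦ Subtype.ext (snRel_iff_sumCoords_eq.1 h)
  refine ⟨equivalence_snRel, F, ⟨?_, ?_⟩, fun e ↦ e.1.sumCoords_self_apply⟩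
  · rintro ⟨e⟩ ⟨e'⟩ h
    exact Quot.sound (snRel_iff_sumCoords_eq.2 (congrArg Subtype.val h))
  · rintro ⟨w, hw⟩
    obtain ⟨e, he⟩ := (finBasisOfFinrankEq K A hn).exists_basis_forall_apply_eq_one w hw.1
    refine ⟨Quot.mk _ ⟨e, semiNatural_of_forall_apply_eq_one hw he⟩, Subtype.ext ?_⟩
    exact e.ext fun i ↦ (e.sumCoords_self_apply (i := i)).trans (he i).symm
end
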